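/- Let sigma be an ordering of the vertices of a hypergraph H and sigma' be obtained by swapping vertices u and v with p = sigma(u) < sigma(v) = q. If r_{sigma'}(p) > r_sigma(p) and r_{sigma'}(i) <= r_sigma(i) for all p < i <= q, then the total cost of sigma' is strictly smaller than that of sigma. -/

import Mathlib

open Finset

/-! The swap changes positions only inside `[p, q]`, so an edge whose first hit lies outside
`[p, q]` under one ordering has the same first hit under the other: the coverages agree outside
`[p, q]`, and since both orderings cover every edge exactly once, the coverage gained at `p` is
lost again on `(p, q]`. Writing the total cost as the first moment `∑ i, i * r(i)` of the
coverage, mass moves from positions `≥ p + 1` down to `p`, so the cost drops by at least the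
gain at `p`. -/

/-- Position at which hyperedge `e` is first hit by the ordering `σ`. -/
noncomputable def firstHit {α : Type*} (σ : α → ℕ) (e : Finset α) : ℕ :=
  sInf (σ '' ↑e)

/-- Total cost of an ordering: each edge pays the position of its first vertex. -/
noncomputable def totalCost {α : Type*} (E : Finset (Finset α)) (σ : α → ℕ) : ℕ :=
  ∑ e ∈ E, firstHit σ e

open scoped Classical in
/-- Effective coverage of position `i`: the number of edges first hit at `i`. -/
noncomputable def coverage {α : Type*} (E : Finset (Finset α)) (σ : α → ℕ) (i : ℕ) : ℕ :=
  (E.filter fun e => firstHit σ e = i).card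

/-- An ordering of the vertex set `V`: a bijection onto positions `{1, ..., |V|}`. -/
def IsOrdering {α : Type*} (V : Finset α) (σ : α → ℕ) : Prop :=
  Set.BijOn σ ↑V (Set.Icc 1 V.card)

theorem sum_Icc_mul_lt_sum_Icc_mul {r r' : ℕ → ℕ} {p q : ℕ} (hpq : p ≤ q)
    (hsum : ∑ i ∈ Icc p q, r' i = ∑ i ∈ Icc p q, r i) (hp : r p < r' p)
    (hle : ∀ i ∈ Ioc p q, r' i ≤ r i) :
    ∑ i ∈ Icc p q, i * r' i < ∑ i ∈ Icc p q, i * r i := by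
  rw [← Ioc_insert_left hpq, sum_insert left_notMem_Ioc, sum_insert left_notMem_Ioc] at hsum ⊢
  have hmoment : ∑ i ∈ Ioc p q, i * r' i + (p + 1) * ∑ i ∈ Ioc p q, r i ≤
      ∑ i ∈ Ioc p q, i * r i + (p + 1) * ∑ i ∈ Ioc p q, r' i := by
    simp only [mul_sum, ← sum_add_distrib]
    refine sum_le_sum fun i hi => ?_
    obtain ⟨hpi, -⟩ := mem_Ioc.mp hi
    have := hle i hi
    nlinarith
  nlinarith

section firstHit

variable {α : Type*}

theorem firstHit_mem (σ : α → ℕ) {e : Finset α} (he : e.Nonempty) : firstHit σ e ∈ σ '' ↑e :=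
  Nat.sInf_mem ((coe_nonempty.mpr he).image σ)

theorem firstHit_le (σ : α → ℕ) {e : Finset α} {x : α} (hx : x ∈ e) : firstHit σ e ≤ σ x :=
  Nat.sInf_le ⟨x, mem_coe.mpr hx, rfl⟩

theorem firstHit_eq_of_notMem_Icc {σ τ : α → ℕ} {p q i : ℕ}
    (hστ : ∀ x, σ x ≠ τ x → σ x ∈ Icc p q ∧ τ x ∈ Icc p q) {e : Finset α}
    (hi : i ∉ Icc p q) (h : firstHit σ e = i) : firstHit τ e = i := by
  rcases e.eq_empty_or_nonempty with rfl | he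
  · -- an empty edge has first hit `sInf ∅ = 0` under every ordering
    simpa [firstHit] using h
  have hagree : ∀ x, σ x ∉ Icc p q → τ x = σ x := fun x hx =>
    (not_imp_comm.mp (fun hne => (hστ x hne).1) hx).symm
  subst h
  rw [mem_Icc, not_and_or, not_le, not_le] at hi
  rcases hi with hip | hqi
  · obtain ⟨x, hx, hxi⟩ := firstHit_mem σ he
    obtain ⟨y, hy, hyτ⟩ := firstHit_mem τ he
    have hτx : τ x = σ x := hagree x (by simp [hxi, hip])
    have hτ_le : firstHit τ e ≤ firstHit σ e := hxi ▸ hτx ▸ firstHit_le τ hx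
    have hσy : σ y = τ y := by
      by_contra hne
      have := (mem_Icc.mp (hστ y hne).2).1
      omega
    have := firstHit_le σ hy
    omega
  · have himage : τ '' ↑e = σ '' ↑e := Set.image_congr fun x hx =>
      hagree x fun hmem => by
        have := firstHit_le σ (mem_coe.mp hx)
        have := (mem_Icc.mp hmem).2
        omega
    rw [firstHit, firstHit, himage]

theorem coverage_eq_of_notMem_Icc {σ τ : α → ℕ} {p q i : ℕ}
    (hστ : ∀ x, σ x ≠ τ x → σ x ∈ Icc p q ∧ τ x ∈ Icc p q) (E : Finset (Finset α))
    (hi : i ∉ Icc p q) : coverage E τ i = coverage E σ i := by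
  have hτσ : ∀ x, τ x ≠ σ x → τ x ∈ Icc p q ∧ σ x ∈ Icc p q := fun x hne =>
    (hστ x hne.symm).symm
  unfold coverage
  congr 1
  exact filter_congr fun e _ =>
    ⟨firstHit_eq_of_notMem_Icc hτσ hi, firstHit_eq_of_notMem_Icc hστ hi⟩

theorem comp_swap_ne_imp_mem_Icc [DecidableEq α] {σ : α → ℕ} {u v : α} (huv : σ u ≤ σ v)
    (x : α) (hx : σ x ≠ (σ ∘ Equiv.swap u v) x) :
    σ x ∈ Icc (σ u) (σ v) ∧ (σ ∘ Equiv.swap u v) x ∈ Icc (σ u) (σ v) := by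
  rcases eq_or_ne x u with rfl | hxu
  · simp [huv]
  rcases eq_or_ne x v with rfl | hxv
  · simp [huv]
  · simp [Equiv.swap_apply_of_ne_of_ne hxu hxv] at hx

end firstHit

section cost

variable {α : Type*} (E : Finset (Finset α))

theorem totalCost_eq_sum_mul_coverage {τ : α → ℕ} {s : Finset ℕ}
    (hs : ∀ e ∈ E, firstHit τ e ∈ s) : totalCost E τ = ∑ i ∈ s, i * coverage E τ i := by
  classical
  rw [totalCost, ← sum_fiberwise_of_maps_to hs]
  refine sum_congr rfl fun i _ => ?_
  rw [coverage, sum_congr rfl fun e he => (mem_filter.mp he).2, sum_const, smul_eq_mul,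
    mul_comm]

theorem card_eq_sum_coverage {τ : α → ℕ} {s : Finset ℕ} (hs : ∀ e ∈ E, firstHit τ e ∈ s) :
    #E = ∑ i ∈ s, coverage E τ i := by
  classical
  rw [card_eq_sum_card_fiberwise hs]
  rfl

theorem totalCost_lt_of_coverage {σ τ : α → ℕ} {p q : ℕ} (hpq : p ≤ q)
    (hout : ∀ i ∉ Icc p q, coverage E τ i = coverage E σ i)
    (hp : coverage E σ p < coverage E τ p)
    (hle : ∀ i ∈ Ioc p q, coverage E τ i ≤ coverage E σ i) :
    totalCost E τ < totalCost E σ := by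
  classical
  set s := Icc p q ∪ (E.image (firstHit σ) ∪ E.image (firstHit τ))
  have hσs : ∀ e ∈ E, firstHit σ e ∈ s := fun e he => by simp [s, mem_image_of_mem _ he]
  have hτs : ∀ e ∈ E, firstHit τ e ∈ s := fun e he => by simp [s, mem_image_of_mem _ he]
  have hsub : Icc p q ⊆ s := subset_union_left
  have hrest : ∀ f : ℕ → ℕ → ℕ,
      ∑ i ∈ s \ Icc p q, f i (coverage E τ i) = ∑ i ∈ s \ Icc p q, f i (coverage E σ i) :=
    fun f => sum_congr rfl fun i hi => by rw [hout i (mem_sdiff.mp hi).2]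
  have hmass : ∑ i ∈ Icc p q, coverage E τ i = ∑ i ∈ Icc p q, coverage E σ i := by
    have h := (card_eq_sum_coverage E hτs).symm.trans (card_eq_sum_coverage E hσs)
    rw [← sum_sdiff hsub, ← sum_sdiff hsub, hrest fun _ c => c] at h
    omega
  rw [totalCost_eq_sum_mul_coverage E hσs, totalCost_eq_sum_mul_coverage E hτs,
    ← sum_sdiff hsub, ← sum_sdiff hsub, hrest fun i c => i * c]
  exact Nat.add_lt_add_left (sum_Icc_mul_lt_sum_Icc_mul hpq hmass hp hle) _

end cost

theorem stmt_14_general {α : Type*} [DecidableEq α] (E : Finset (Finset α))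
    (σ : α → ℕ)
    (u v : α) (huv : σ u < σ v)
    (h1 : coverage E σ (σ u) < coverage E (σ ∘ Equiv.swap u v) (σ u))
    (h2 : ∀ i, σ u < i → i ≤ σ v →
      coverage E (σ ∘ Equiv.swap u v) i ≤ coverage E σ i) :
    totalCost E (σ ∘ Equiv.swap u v) < totalCost E σ :=
  totalCost_lt_of_coverage E huv.le
    (fun _ hi => coverage_eq_of_notMem_Icc (comp_swap_ne_imp_mem_Icc huv.le) E hi) h1
    (fun i hi => h2 i (mem_Ioc.mp hi).1 (mem_Ioc.mp hi).2)

/-- Swapping two vertices `u, v` (with `σ u < σ v`) in an ordering: if the swap strictly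
increases the effective coverage at position `σ u` and does not increase the coverage at
any position in `(σ u, σ v]`, then the new ordering has strictly smaller total cost. -/
theorem stmt_14 {α : Type*} [DecidableEq α] (V : Finset α) (E : Finset (Finset α))
    (hE : ∀ e ∈ E, e.Nonempty ∧ e ⊆ V)
    (σ : α → ℕ) (hσ : IsOrdering V σ)
    (u v : α) (hu : u ∈ V) (hv : v ∈ V) (huv : σ u < σ v)
    (h1 : coverage E σ (σ u) < coverage E (σ ∘ Equiv.swap u v) (σ u))
    (h2 : ∀ i, σ u < i → i ≤ σ v →
      coverage E (σ ∘ Equiv.swap u v) i ≤ coverage E σ i) :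
    totalCost E (σ ∘ Equiv.swap u v) < totalCost E σ :=
  stmt_14_general E σ u v huv h1 h2
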